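/- arXiv:1609.00744 — 4 statements merged into one kernel-verified Lean document; each statement's English description precedes it below -/
import Mathlib

section
/- There is no nontrivial partition regular family of subsets of ℕ that is Σ⁰₂ (a countable union of closed sets) in the Cantor space 𝒫(ℕ). -/
/-- There is no nontrivial partition regular family of subsets of ℕ that is Σ⁰₂
(a countable union of closed sets) in the Cantor space 2^ℕ. -/
theorem no_sigma02_partition_regular (𝓕 : Set (Set ℕ))
    (hne : 𝓕.Nonempty)
    (hsup : ∀ A ∈ 𝓕, ∀ B : Set ℕ, A ⊆ B → B ∈ 𝓕)
    (hpr : ∀ A ∈ 𝓕, ∀ (k : ℕ) (As : Fin k → Set ℕ), A = ⋃ i, As i → ∃ i, As i ∈ 𝓕)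
    (hinf : ∀ A ∈ 𝓕, A.Infinite) :
    ¬ ∃ C : ℕ → Set (ℕ → Bool), (∀ n, IsClosed (C n)) ∧
      {ω : ℕ → Bool | {n | ω n = true} ∈ 𝓕} = ⋃ n, C n := by
  classical
  rintro ⟨C, hC, hS⟩
  -- members of C k determine sets in 𝓕
  have hCmem : ∀ k, ∀ ω ∈ C k, {n | ω n = true} ∈ 𝓕 := by
    intro k ω hω
    have : ω ∈ ⋃ n, C n := Set.mem_iUnion.2 ⟨k, hω⟩
    rw [← hS] at this
    exact this
  -- Step 1: key compactness lemma
  have key : ∀ n k : ℕ, ∃ m, n < m ∧ ∀ ω : ℕ → Bool,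
      (∀ j, n ≤ j → j < m → ω j = false) → ∀ k' ≤ k, ω ∉ C k' := by
    intro n k
    by_contra hcon
    push_neg at hcon
    set D : Set (ℕ → Bool) := ⋃ k' ∈ Finset.range (k + 1), C k' with hD
    have hDclosed : IsClosed D := by
      apply Set.Finite.isClosed_biUnion (Finset.finite_toSet _)
      intro i _
      exact hC i
    set V : ℕ → Set (ℕ → Bool) :=
      fun m => D ∩ ⋂ j ∈ Set.Ico n (n + m), {ω : ℕ → Bool | ω j = false} with hV
    have hVclosed : ∀ m, IsClosed (V m) := by
      intro m
      refine hDclosed.inter (isClosed_biInter fun j _ => ?_)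
      exact isClosed_eq (continuous_apply j) continuous_const
    have hVsub : ∀ m, V (m + 1) ⊆ V m := by
      intro m ω hω
      refine ⟨hω.1, ?_⟩
      refine Set.mem_iInter₂.mpr fun j hj => ?_
      exact Set.mem_iInter₂.mp hω.2 j ⟨hj.1, hj.2.trans_le (by omega)⟩
    have hVne : ∀ m, (V m).Nonempty := by
      intro m
      obtain ⟨ω, hω1, k', hk', hωC⟩ := hcon (n + m + 1) (by omega)
      refine ⟨ω, ?_, ?_⟩
      · exact Set.mem_biUnion (Finset.mem_range.2 (by omega)) hωC
      · exact Set.mem_iInter₂.mpr fun j hj =>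
          hω1 j hj.1 (hj.2.trans (Nat.lt_succ_self _))
    have hInter : (⋂ m, V m).Nonempty :=
      IsCompact.nonempty_iInter_of_sequence_nonempty_isCompact_isClosed V hVsub hVne
        ((hVclosed 0).isCompact) hVclosed
    obtain ⟨ω, hω⟩ := hInter
    have hωD : ω ∈ D := (Set.mem_iInter.mp hω 0).1
    have hfalse : ∀ j, n ≤ j → ω j = false := by
      intro j hj
      have h2 := (Set.mem_iInter.mp hω (j + 1)).2
      exact Set.mem_iInter₂.mp h2 j ⟨hj, by omega⟩
    obtain ⟨k', hk'mem, hωC⟩ := Set.mem_iUnion₂.mp hωD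
    have hTmem : {i | ω i = true} ∈ 𝓕 := hCmem k' ω hωC
    have hTfin : {i | ω i = true} ⊆ Set.Iio n := by
      intro i hi
      by_contra hlt
      simp only [Set.mem_Iio, not_lt] at hlt
      rw [Set.mem_setOf_eq, hfalse i hlt] at hi
      exact Bool.false_ne_true hi
    exact hinf _ hTmem ((Set.finite_Iio n).subset hTfin)
  choose M hM1 hM2 using key
  -- Step 2: the interval endpoints
  obtain ⟨e, he0, hestep⟩ : ∃ e : ℕ → ℕ, e 0 = 0 ∧ ∀ k, e (k + 1) = M (e k) k :=
    ⟨fun k => Nat.rec 0 (fun k ek => M ek k) k, rfl, fun _ => rfl⟩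
  have hemono : StrictMono e :=
    strictMono_nat_of_lt_succ fun k => by rw [hestep k]; exact hM1 _ _
  have hex : ∀ n : ℕ, ∃ k, n < e k := fun n =>
    ⟨n + 1, lt_of_lt_of_le (Nat.lt_succ_self n) hemono.le_apply⟩
  -- interval index
  let idx : ℕ → ℕ := fun n => Nat.find (hex n) - 1
  have hidx : ∀ n, e (idx n) ≤ n ∧ n < e (idx n + 1) := by
    intro n
    have hspec : n < e (Nat.find (hex n)) := Nat.find_spec (hex n)
    have hpos : Nat.find (hex n) ≠ 0 := by
      intro h0
      rw [h0, he0] at hspec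
      omega
    have heq : idx n + 1 = Nat.find (hex n) := by
      simp only [idx]; omega
    constructor
    · exact le_of_not_gt fun hlt => Nat.find_min (hex n) (by omega) hlt
    · rw [heq]; exact hspec
  have hidxu : ∀ k j, e k ≤ j → j < e (k + 1) → idx j = k := by
    intro k j h1 h2
    rcases lt_trichotomy (idx j) k with h | h | h
    · have ha : e (idx j + 1) ≤ e k := hemono.monotone (by omega)
      have hb := (hidx j).2
      omega
    · exact h
    · have ha : e (k + 1) ≤ e (idx j) := hemono.monotone (by omega)
      have hb := (hidx j).1
      omega
  -- Step 3: partition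
  let A : Set ℕ := {n | Even (idx n)}
  obtain ⟨A₀, hA₀⟩ := hne
  have huniv : Set.univ ∈ 𝓕 := hsup A₀ hA₀ _ (Set.subset_univ _)
  obtain ⟨i, hi⟩ := hpr Set.univ huniv 2 ![A, Aᶜ] (by
    ext n
    simp only [Set.mem_univ, Set.mem_iUnion, true_iff]
    by_cases hn : n ∈ A
    · exact ⟨0, hn⟩
    · exact ⟨1, hn⟩)
  have hcases : (![A, Aᶜ] i) = A ∨ (![A, Aᶜ] i) = Aᶜ := by
    fin_cases i <;> simp
  obtain ⟨B, hB𝓕, hBc⟩ : ∃ B, B ∈ 𝓕 ∧ (B = A ∨ B = Aᶜ) := ⟨_, hi, hcases⟩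
  -- indicator of B is in some C k
  let ω : ℕ → Bool := fun n => if n ∈ B then true else false
  have hωset : {n | ω n = true} = B := by
    ext n
    simp only [Set.mem_setOf_eq, ω]
    split_ifs with h <;> simp [h]
  have hωS : ω ∈ ⋃ n, C n := by
    rw [← hS]
    show {n | ω n = true} ∈ 𝓕
    rw [hωset]
    exact hB𝓕
  obtain ⟨k, hk⟩ := Set.mem_iUnion.mp hωS
  -- derive contradiction
  have contra : ∀ m, k ≤ m → (∀ j, e m ≤ j → j < e (m + 1) → j ∉ B) → False := by
    intro m hkm hout
    have : ω ∉ C k := by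
      refine hM2 (e m) m ω ?_ k hkm
      intro j hj1 hj2
      rw [← hestep m] at hj2
      simp only [ω, if_neg (hout j hj1 hj2)]
    exact this hk
  rcases hBc with h | h <;> subst h
  · -- B = A : take the odd interval 2k+1
    refine contra (2 * k + 1) (by omega) ?_
    intro j h1 h2 hjB
    have hj : idx j = 2 * k + 1 := hidxu _ _ h1 h2
    have hev : Even (idx j) := hjB
    rw [hj] at hev
    obtain ⟨t, ht⟩ := hev
    omega
  · -- B = Aᶜ : take the even interval 2k
    refine contra (2 * k) (by omega) ?_
    intro j h1 h2 hjB
    have hj : idx j = 2 * k := hidxu _ _ h1 h2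
    have hev : ¬ Even (idx j) := hjB
    rw [hj] at hev
    exact hev ⟨k, by omega⟩
end

section
/- Fix a graph on ℕ satisfying property (†): for every finite F ⊆ ℕ and every A ⊆ ℕ, if for every type t over F the set {m ∈ A \ F : m has type t} has positive upper density, then for all but finitely many n, for every type t' over F ∪ {n}, the set {m ∈ A \ (F ∪ {n}) : m has type t'} has positive upper density. Then every subset A ⊆ ℕ of positive upper density contains every countable graph as an induced subgraph. -/
/-!
Enumerate the vertices of the countable graph by ℕ and embed them one at a time, keeping the
invariant that every type over the finite set of chosen vertices is realised on a subset of `A`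
of positive upper density. To place the next vertex, the realisers of its prescribed type form
a set of positive upper density, hence an infinite set, while by (†) all but finitely many
candidates preserve the invariant; so some realiser does both.
-/

/-- The upper density of a set of natural numbers. -/
noncomputable def upperDensity (A : Set ℕ) : ℝ :=
  Filter.limsup
    (fun n : ℕ => (∑ m ∈ Finset.Icc 1 n, A.indicator (fun _ => (1 : ℝ)) m) / n)
    Filter.atTop

/-- `m` has type `t` over the finite set `F` in the graph `G`. -/
def HasType (G : SimpleGraph ℕ) (m : ℕ) (F : Finset ℕ) (t : ℕ → Bool) : Prop :=
  ∀ v ∈ F, (G.Adj m v ↔ t v = true)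

open Filter Finset Function

lemma upperDensity_coe_finset (T : Finset ℕ) : upperDensity T = 0 := by
  have hcount (n : ℕ) : ∑ m ∈ Icc 1 n, (T : Set ℕ).indicator (fun _ => (1 : ℝ)) m ≤ #T := by
    rw [sum_indicator_eq_sum_inter, sum_const, nsmul_one]
    exact_mod_cast card_le_card inter_subset_right
  refine Tendsto.limsup_eq <| squeeze_zero (fun n => ?_) (fun n => ?_)
    (tendsto_const_div_atTop_nhds_zero_nat (#T : ℝ))
  · exact div_nonneg (sum_nonneg fun m _ => Set.indicator_nonneg (fun _ _ => zero_le_one) m)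
      n.cast_nonneg
  · exact div_le_div_of_nonneg_right (hcount n) n.cast_nonneg

lemma Set.infinite_of_upperDensity_pos {S : Set ℕ} (h : 0 < upperDensity S) : S.Infinite := by
  intro hS
  obtain ⟨T, rfl⟩ := hS.exists_finset_coe
  exact h.ne' (upperDensity_coe_finset T)

lemma exists_forall_of_exists_update {α : Type*} (P : ℕ → (ℕ → α) → Prop)
    (hP : ∀ n f g, Set.EqOn f g (Set.Iio n) → P n f → P n g) {f₀ : ℕ → α} (h₀ : P 0 f₀)
    (hstep : ∀ n f, P n f → ∃ a, P (n + 1) (update f n a)) : ∃ f, ∀ n, P n f := by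
  classical
  have hstep' (n : ℕ) (f : ℕ → α) : ∃ a, P n f → P (n + 1) (update f n a) := by
    by_cases h : P n f
    · obtain ⟨a, ha⟩ := hstep n f h
      exact ⟨a, fun _ => ha⟩
    · exact ⟨f₀ 0, fun h' => absurd h' h⟩
  choose next hnext using hstep'
  let approx (k : ℕ) : ℕ → α := Nat.rec f₀ (fun k g => update g k (next k g)) k
  have happrox (k : ℕ) : P k (approx k) := by
    induction k with
    | zero => exact h₀
    | succ k ih => exact hnext k _ ih
  -- the value at `i` is frozen from stage `i + 1` on
  have hstable (k : ℕ) : Set.EqOn (approx k) (fun i => approx (i + 1) i) (Set.Iio k) := by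
    induction k with
    | zero => simp
    | succ k ih =>
      intro i hi
      rcases Nat.lt_add_one_iff_lt_or_eq.1 hi with hi | rfl
      · exact (update_of_ne hi.ne _ _).trans (ih hi)
      · rfl
  exact ⟨_, fun k => hP k _ _ (hstable k) (happrox k)⟩

def TypesDense (G : SimpleGraph ℕ) (A : Set ℕ) (F : Finset ℕ) : Prop :=
  ∀ t : ℕ → Bool, 0 < upperDensity {m | m ∈ A ∧ m ∉ F ∧ HasType G m F t}

def ExtendsTypesDensely (G : SimpleGraph ℕ) (A : Set ℕ) : Prop :=
  ∀ F, TypesDense G A F → ∀ᶠ n in cofinite, TypesDense G A (insert n F)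

section

variable {G : SimpleGraph ℕ} {A : Set ℕ}

lemma typesDense_empty (hA : 0 < upperDensity A) : TypesDense G A ∅ := by
  intro t
  simpa [HasType] using hA

lemma TypesDense.exists_realizer (hdag : ExtendsTypesDensely G A) {F : Finset ℕ}
    (hF : TypesDense G A F) (t : ℕ → Bool) :
    ∃ m ∈ A, m ∉ F ∧ HasType G m F t ∧ TypesDense G A (insert m F) := by
  obtain ⟨m, ⟨hmA, hmF, hmt⟩, hm⟩ :=
    ((Set.infinite_of_upperDensity_pos (hF t)).sdiff (eventually_cofinite.1 (hdag F hF))).nonempty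
  exact ⟨m, hmA, hmF, hmt, not_not.1 hm⟩

variable {H : SimpleGraph ℕ} {n : ℕ} {f : ℕ → ℕ}

structure IsDensePrefixEmbedding (H G : SimpleGraph ℕ) (A : Set ℕ) (n : ℕ) (f : ℕ → ℕ) :
    Prop where
  injOn : Set.InjOn f (Set.Iio n)
  mapsTo : Set.MapsTo f (Set.Iio n) A
  adj_iff : ∀ i < n, ∀ j < n, H.Adj i j ↔ G.Adj (f i) (f j)
  typesDense : TypesDense G A ((range n).image f)

lemma isDensePrefixEmbedding_zero (hA : 0 < upperDensity A) (f : ℕ → ℕ) :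
    IsDensePrefixEmbedding H G A 0 f where
  injOn := by simp
  mapsTo i hi := absurd hi (Nat.not_lt_zero i)
  adj_iff := by simp
  typesDense := by simpa using typesDense_empty hA

lemma IsDensePrefixEmbedding.congr {g : ℕ → ℕ} (h : IsDensePrefixEmbedding H G A n f)
    (hfg : Set.EqOn f g (Set.Iio n)) : IsDensePrefixEmbedding H G A n g where
  injOn := h.injOn.congr hfg
  mapsTo := h.mapsTo.congr hfg
  adj_iff i hi j hj := by rw [← hfg hi, ← hfg hj]; exact h.adj_iff i hi j hj
  typesDense := by
    rw [← image_congr (by simpa using hfg)]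
    exact h.typesDense

lemma IsDensePrefixEmbedding.exists_update (hdag : ExtendsTypesDensely G A)
    (h : IsDensePrefixEmbedding H G A n f) :
    ∃ m, IsDensePrefixEmbedding H G A (n + 1) (update f n m) := by
  classical
  -- the type over the image that the new vertex `n` must realise
  let t : ℕ → Bool := fun v => decide (∃ i < n, f i = v ∧ H.Adj i n)
  obtain ⟨m, hmA, hmF, hmt, hdense⟩ := h.typesDense.exists_realizer hdag t
  have hnew (i : ℕ) (hi : i < n) : H.Adj i n ↔ G.Adj (f i) m := by
    rw [G.adj_comm, hmt (f i) (mem_image_of_mem f (mem_range.2 hi))]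
    simp only [t, decide_eq_true_eq]
    constructor
    · exact fun hin => ⟨i, hi, rfl, hin⟩
    · rintro ⟨j, hj, hji, hjn⟩
      rwa [← h.injOn hj hi hji]
  have hold : Set.EqOn (update f n m) f (Set.Iio n) := fun i hi => update_of_ne (ne_of_lt hi) _ _
  have hIio : Set.Iio (n + 1) = insert n (Set.Iio n) := Order.Iio_succ_eq_insert n
  have hmF' : m ∉ f '' Set.Iio n := fun ⟨i, hi, hfi⟩ =>
    hmF (hfi ▸ mem_image_of_mem f (mem_range.2 hi))
  refine ⟨m, ⟨?_, ?_, ?_, ?_⟩⟩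
  · rw [hIio, Set.injOn_insert (Set.mem_Iio.not.2 (lt_irrefl n)), update_self, hold.image_eq]
    exact ⟨h.injOn.congr hold.symm, hmF'⟩
  · rw [hIio]
    rintro i (rfl | hi)
    · rwa [update_self]
    · rw [hold hi]
      exact h.mapsTo hi
  · intro i hi j hj
    rcases Nat.lt_add_one_iff_lt_or_eq.1 hi with hi | rfl <;>
      rcases Nat.lt_add_one_iff_lt_or_eq.1 hj with hj | rfl
    · rw [hold hi, hold hj]
      exact h.adj_iff i hi j hj
    · rw [hold hi, update_self]
      exact hnew i hi
    · rw [hold hj, update_self, H.adj_comm, G.adj_comm]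
      exact hnew j hj
    · simp
  · rw [range_add_one, image_insert, update_self, image_congr fun _ hi => hold (mem_range.1 hi)]
    exact hdense

lemma exists_embedding_forall_mem (hdag : ExtendsTypesDensely G A)
    (hA : 0 < upperDensity A) (H : SimpleGraph ℕ) : ∃ φ : H ↪g G, ∀ i, φ i ∈ A := by
  obtain ⟨f, hf⟩ := exists_forall_of_exists_update (IsDensePrefixEmbedding H G A)
    (fun _ _ _ hfg h => h.congr hfg) (isDensePrefixEmbedding_zero hA id)
    (fun _ _ h => h.exists_update hdag)
  have hlt (i j : ℕ) : i < max i j + 1 ∧ j < max i j + 1 := by omega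
  refine ⟨⟨⟨f, fun i j hij => (hf _).injOn (hlt i j).1 (hlt i j).2 hij⟩, ?_⟩,
    fun i => (hf (i + 1)).mapsTo i.lt_add_one⟩
  exact fun {i j} => ((hf _).adj_iff i (hlt i j).1 j (hlt i j).2).symm

end

/-- If a graph on ℕ satisfies property (†), then every set of positive upper density
contains every countable graph as an induced subgraph. -/
theorem pud_universal (G : SimpleGraph ℕ)
    (hdag : ∀ (F : Finset ℕ) (A : Set ℕ),
      (∀ t : ℕ → Bool,
        0 < upperDensity {m | m ∈ A ∧ m ∉ F ∧ HasType G m F t}) →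
      ∀ᶠ n in Filter.cofinite, ∀ t' : ℕ → Bool,
        0 < upperDensity {m | m ∈ A ∧ m ∉ insert n F ∧ HasType G m (insert n F) t'})
    (A : Set ℕ) (hA : 0 < upperDensity A)
    (V : Type) [Countable V] (H : SimpleGraph V) :
    ∃ f : V → ℕ, Function.Injective f ∧ (∀ v, f v ∈ A) ∧
      ∀ u v : V, H.Adj u v ↔ G.Adj (f u) (f v) := by
  obtain ⟨e, he⟩ := exists_injective_nat V
  let e' : V ↪ ℕ := ⟨e, he⟩
  obtain ⟨φ, hφA⟩ := exists_embedding_forall_mem (fun F => hdag F A) hA (H.map e')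
  let ψ : H ↪g G := φ.comp (SimpleGraph.Embedding.map e' H)
  exact ⟨ψ, ψ.injective, fun v => hφA (e v), fun u v => ψ.map_adj_iff.symm⟩
end

section
/- Fix a graph on ℕ satisfying property (*): for all pairwise disjoint F₁,...,F_ℓ ⊆ ℕ each of size 1 with chosen adjacency values, the set of vertices avoiding all ℓ specified adjacencies has natural density (1/2)^ℓ. Then for any finite F ⊆ ℕ, any A ⊆ ℕ, and any type t over F such that A_t = {m ∈ A \ F : m has type t} has positive upper density: for all but finitely many n ∈ ℕ \ F, both {m ∈ A_t : m adjacent to n} and {m ∈ A_t : m not adjacent to n} have positive upper density. -/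
open Filter

noncomputable def dseq (A : Set ℕ) (n : ℕ) : ℝ :=
  (∑ m ∈ Finset.Icc 1 n, A.indicator (fun _ => (1 : ℝ)) m) / n

lemma upperDensity_eq (A : Set ℕ) : upperDensity A = limsup (dseq A) atTop := rfl

lemma ind_nonneg (A : Set ℕ) (m : ℕ) : 0 ≤ A.indicator (fun _ => (1 : ℝ)) m :=
  Set.indicator_nonneg (fun _ _ => zero_le_one) m

lemma ind_le_one (A : Set ℕ) (m : ℕ) : A.indicator (fun _ => (1 : ℝ)) m ≤ 1 := by
  classical
  rw [Set.indicator_apply]; split <;> norm_num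

lemma div_nat_mono {a b : ℝ} (n : ℕ) (h : a ≤ b) : a / n ≤ b / n := by
  rcases Nat.eq_zero_or_pos n with hn | hn
  · simp [hn]
  · exact div_le_div_of_nonneg_right h (Nat.cast_nonneg n)

lemma dseq_nonneg (A : Set ℕ) (n : ℕ) : 0 ≤ dseq A n :=
  div_nonneg (Finset.sum_nonneg fun m _ => ind_nonneg A m) (Nat.cast_nonneg n)

lemma dseq_le_one (A : Set ℕ) (n : ℕ) : dseq A n ≤ 1 := by
  apply div_le_one_of_le₀
  · calc (∑ m ∈ Finset.Icc 1 n, A.indicator (fun _ => (1 : ℝ)) m)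
        ≤ ∑ m ∈ Finset.Icc 1 n, (1 : ℝ) :=
          Finset.sum_le_sum fun m _ => ind_le_one A m
      _ = n := by simp
  · exact Nat.cast_nonneg n

lemma dseq_bddU (A : Set ℕ) : IsBoundedUnder (· ≤ ·) atTop (dseq A) :=
  isBoundedUnder_of ⟨1, fun n => dseq_le_one A n⟩

lemma dseq_bddL (A : Set ℕ) : IsBoundedUnder (· ≥ ·) atTop (dseq A) :=
  isBoundedUnder_of ⟨0, fun n => dseq_nonneg A n⟩

lemma dseq_cobdd (A : Set ℕ) : IsCoboundedUnder (· ≤ ·) atTop (dseq A) :=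
  (dseq_bddL A).isCoboundedUnder_le

lemma upperDensity_nonneg (A : Set ℕ) : 0 ≤ upperDensity A :=
  le_limsup_of_frequently_le (Frequently.of_forall fun n => dseq_nonneg A n) (dseq_bddU A)

lemma upperDensity_union_le (A B C : Set ℕ) (h : A ⊆ B ∪ C) :
    upperDensity A ≤ upperDensity B + upperDensity C := by
  classical
  have h1 : ∀ n, dseq A n ≤ dseq B n + dseq C n := by
    intro n
    have hind : ∀ m, A.indicator (fun _ => (1 : ℝ)) m ≤
        B.indicator (fun _ => (1 : ℝ)) m + C.indicator (fun _ => (1 : ℝ)) m := by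
      intro m
      by_cases hm : m ∈ A
      · rcases h hm with hb | hc
        · calc A.indicator (fun _ => (1:ℝ)) m ≤ 1 := ind_le_one A m
            _ = B.indicator (fun _ => (1:ℝ)) m + 0 := by simp [hb]
            _ ≤ _ := by gcongr; exact ind_nonneg C m
        · calc A.indicator (fun _ => (1:ℝ)) m ≤ 1 := ind_le_one A m
            _ = 0 + C.indicator (fun _ => (1:ℝ)) m := by simp [hc]
            _ ≤ _ := by gcongr; exact ind_nonneg B m
      · have : A.indicator (fun _ => (1:ℝ)) m = 0 := Set.indicator_of_notMem hm _
        rw [this]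
        exact add_nonneg (ind_nonneg B m) (ind_nonneg C m)
    calc dseq A n ≤ (∑ m ∈ Finset.Icc 1 n, (B.indicator (fun _ => (1:ℝ)) m
            + C.indicator (fun _ => (1:ℝ)) m)) / n :=
          div_nat_mono n (Finset.sum_le_sum fun m _ => hind m)
      _ = dseq B n + dseq C n := by
          rw [Finset.sum_add_distrib, add_div]; rfl
  calc upperDensity A ≤ limsup (dseq B + dseq C) atTop := by
        rw [upperDensity_eq]
        refine limsup_le_limsup (Eventually.of_forall h1) (dseq_cobdd A)
          (isBoundedUnder_of ⟨2, fun n => ?_⟩)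
        have := dseq_le_one B n
        have := dseq_le_one C n
        show dseq B n + dseq C n ≤ 2
        linarith
    _ ≤ upperDensity B + upperDensity C :=
        limsup_add_le (dseq_bddL B) (dseq_bddU B) (dseq_cobdd C) (dseq_bddU C)

lemma upperDensity_finite_le (S : Set ℕ) (h : S.Finite) : upperDensity S ≤ 0 := by
  classical
  have key : Tendsto (dseq S) atTop (nhds 0) := by
    apply squeeze_zero (f := dseq S) (g := fun n : ℕ => (h.toFinset.card : ℝ) / n) (fun n => dseq_nonneg S n)
    · intro n
      apply div_nat_mono
      rw [Finset.sum_indicator_eq_sum_filter]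
      have hsub : (Finset.Icc 1 n).filter (· ∈ S) ⊆ h.toFinset := by
        intro x hx
        simp only [Finset.mem_filter] at hx
        exact h.mem_toFinset.mpr hx.2
      calc (∑ _m ∈ (Finset.Icc 1 n).filter (· ∈ S), (1:ℝ))
          = ((Finset.Icc 1 n).filter (· ∈ S)).card := by simp
        _ ≤ (h.toFinset.card : ℝ) := by exact_mod_cast Finset.card_le_card hsub
    · exact tendsto_const_div_atTop_nhds_zero_nat _
  rw [upperDensity_eq, key.limsup_eq]

lemma upperDensity_mono {A B : Set ℕ} (h : A ⊆ B) : upperDensity A ≤ upperDensity B := by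
  have := upperDensity_union_le A B ∅ (by simpa using h)
  have h0 : upperDensity (∅ : Set ℕ) ≤ 0 := upperDensity_finite_le _ (Set.finite_empty)
  linarith

lemma upperDensity_biUnion_le (L : Finset ℕ) (B : ℕ → Set ℕ)
    (h : ∀ v ∈ L, upperDensity (B v) ≤ 0) :
    upperDensity (⋃ v ∈ L, B v) ≤ 0 := by
  classical
  induction L using Finset.induction with
  | empty => simpa using upperDensity_finite_le ∅ Set.finite_empty
  | @insert a s ha ih =>
    have hcov : (⋃ v ∈ insert a s, B v) ⊆ B a ∪ ⋃ v ∈ s, B v := by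
      intro x hx
      simp only [Set.mem_iUnion, Finset.mem_insert, exists_prop] at hx
      rcases hx with ⟨v, hv | hv, hxv⟩
      · left; exact hv ▸ hxv
      · right; exact Set.mem_biUnion hv hxv
    have := upperDensity_union_le _ _ _ hcov
    have h1 := h a (Finset.mem_insert_self a s)
    have h2 := ih (fun v hv => h v (Finset.mem_insert_of_mem hv))
    linarith

/-- If a graph on ℕ satisfies property (*) (for singleton sets with chosen adjacency values,
the set of vertices avoiding all the specified adjacencies has the expected density), then
for any finite F, A ⊆ ℕ and type t over F with A_t of positive upper density, for all but
finitely many n both the neighbors and the non-neighbors of n inside A_t have positive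
upper density. -/
theorem recursion_engine (G : SimpleGraph ℕ)
    (hstar : ∀ (L : Finset ℕ) (b : ℕ → Bool),
      Filter.Tendsto
        (fun n : ℕ => (∑ m ∈ Finset.Icc 1 n,
            Set.indicator {m : ℕ | m ∉ L ∧ ∀ v ∈ L, ¬ (G.Adj m v ↔ b v = true)}
              (fun _ => (1 : ℝ)) m) / n)
        Filter.atTop (nhds ((1 / 2 : ℝ) ^ L.card)))
    (F : Finset ℕ) (A : Set ℕ) (t : ℕ → Bool)
    (hpud : 0 < upperDensity {m | m ∈ A ∧ m ∉ F ∧ HasType G m F t}) :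
    {n : ℕ | n ∉ F ∧
      ¬ ((0 < upperDensity
            {m | (m ∈ A ∧ m ∉ F ∧ HasType G m F t) ∧ m ≠ n ∧ G.Adj m n}) ∧
         (0 < upperDensity
            {m | (m ∈ A ∧ m ∉ F ∧ HasType G m F t) ∧ m ≠ n ∧ ¬ G.Adj m n}))}.Finite := by
  classical
  set At : Set ℕ := {m | m ∈ A ∧ m ∉ F ∧ HasType G m F t} with hAt
  by_contra hinf
  replace hinf : Set.Infinite _ := hinf
  -- choose ℓ with (1/2)^ℓ < δ
  obtain ⟨ℓ, hℓ⟩ := exists_pow_lt_of_lt_one hpud (by norm_num : (1/2 : ℝ) < 1)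
  obtain ⟨L, hLsub, hLcard⟩ := hinf.exists_subset_card_eq ℓ
  -- choose bad side for each v ∈ L
  set b : ℕ → Bool := fun v =>
    if upperDensity {m | m ∈ At ∧ m ≠ v ∧ G.Adj m v} ≤ 0 then true else false with hb
  set Bv : ℕ → Set ℕ := fun v => {m | m ∈ At ∧ m ≠ v ∧ (G.Adj m v ↔ b v = true)} with hBv
  have hBv0 : ∀ v ∈ L, upperDensity (Bv v) ≤ 0 := by
    intro v hv
    have hbad := hLsub hv
    simp only [Set.mem_setOf_eq] at hbad
    have hdisj : upperDensity {m | m ∈ At ∧ m ≠ v ∧ G.Adj m v} ≤ 0 ∨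
        upperDensity {m | m ∈ At ∧ m ≠ v ∧ ¬ G.Adj m v} ≤ 0 := by
      rcases not_and_or.mp hbad.2 with h | h
      · left; exact le_of_not_gt h
      · right; exact le_of_not_gt h
    by_cases hc : upperDensity {m | m ∈ At ∧ m ≠ v ∧ G.Adj m v} ≤ 0
    · have : b v = true := if_pos hc
      have hset : Bv v = {m | m ∈ At ∧ m ≠ v ∧ G.Adj m v} := by
        ext m
        simp only [hBv, Set.mem_setOf_eq, this, iff_true]
      rw [hset]; exact hc
    · have hbv : b v = false := if_neg hc
      have hset : Bv v = {m | m ∈ At ∧ m ≠ v ∧ ¬ G.Adj m v} := by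
        ext m
        simp only [hBv, Set.mem_setOf_eq, hbv]
        constructor <;> rintro ⟨h1, h2, h3⟩ <;> exact ⟨h1, h2, by simpa using h3⟩
      rw [hset]
      exact hdisj.resolve_left hc
  -- the covering
  set C : Set ℕ := {m : ℕ | m ∉ L ∧ ∀ v ∈ L, ¬ (G.Adj m v ↔ b v = true)} with hC
  have hcov : At ⊆ (↑L ∪ C) ∪ ⋃ v ∈ L, Bv v := by
    intro m hm
    by_cases hmL : m ∈ L
    · exact Or.inl (Or.inl hmL)
    by_cases hmB : ∃ v ∈ L, m ∈ Bv v
    · obtain ⟨v, hv, hmv⟩ := hmB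
      exact Or.inr (Set.mem_biUnion hv hmv)
    · push_neg at hmB
      refine Or.inl (Or.inr ⟨hmL, fun v hv hiff => ?_⟩)
      exact hmB v hv ⟨hm, fun he => hmL (he ▸ hv), hiff⟩
  have hudC : upperDensity C = (1/2 : ℝ) ^ L.card := (hstar L b).limsup_eq
  have h1 : upperDensity At ≤ upperDensity (↑L ∪ C) + upperDensity (⋃ v ∈ L, Bv v) :=
    upperDensity_union_le _ _ _ hcov
  have h2 : upperDensity (↑L ∪ C : Set ℕ) ≤ upperDensity (↑L : Set ℕ) + upperDensity C :=
    upperDensity_union_le _ _ _ subset_rfl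
  have h3 : upperDensity (↑L : Set ℕ) ≤ 0 := upperDensity_finite_le _ L.finite_toSet
  have h4 : upperDensity (⋃ v ∈ L, Bv v) ≤ 0 := upperDensity_biUnion_le L Bv hBv0
  have : upperDensity At ≤ (1/2 : ℝ) ^ ℓ := by
    rw [← hLcard]
    linarith [hudC ▸ h2]
  linarith
end

section
/- Let 𝓕 = ⋂_{n∈ℕ} U_n be a partition regular family of infinite subsets of ℕ, with each U_n open in 𝒫(ℕ). Fix a graph on ℕ satisfying property (††): for every finite F ⊆ ℕ and every type t over F, the set {n > max F : n has type t over F} belongs to 𝓕. Then there exists A ∈ 𝓕 such that every connected component of the induced subgraph on A is finite. -/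
open Classical in
lemma step_ex (G : SimpleGraph ℕ) (𝓕 : Set (Set ℕ))
    (hsup : ∀ A ∈ 𝓕, ∀ B : Set ℕ, A ⊆ B → B ∈ 𝓕)
    (U : ℕ → Set (ℕ → Bool)) (hUopen : ∀ n, IsOpen (U n))
    (hFU : {ω : ℕ → Bool | {n | ω n = true} ∈ 𝓕} = ⋂ n, U n)
    (hddag : ∀ (F : Finset ℕ) (t : ℕ → Bool),
      {n : ℕ | (∀ v ∈ F, v < n) ∧ ∀ v ∈ F, (G.Adj n v ↔ t v = true)} ∈ 𝓕)
    (n : ℕ) (m : ℕ) (S : Finset ℕ) :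
    ∃ p : ℕ × Finset ℕ, m < p.1 ∧ S ⊆ p.2 ∧ (∀ a ∈ p.2, a ≤ p.1) ∧
      (∀ a ∈ p.2, a ∉ S → m < a ∧ ∀ v ≤ m, ¬ G.Adj a v) ∧
      (∀ ω' : ℕ → Bool, (∀ i ≤ p.1, (ω' i = true ↔ i ∈ p.2)) → ω' ∈ U n) := by
  set B : Set ℕ := {j : ℕ | (∀ v ∈ Finset.range (m+1), v < j) ∧
      ∀ v ∈ Finset.range (m+1), (G.Adj j v ↔ (fun _ => false) v = true)} with hB
  have hBF : B ∈ 𝓕 := hddag (Finset.range (m+1)) (fun _ => false)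
  set C : Set ℕ := ↑S ∪ B with hC
  have hCF : C ∈ 𝓕 := hsup B hBF C Set.subset_union_right
  set ω : ℕ → Bool := fun i => decide (i ∈ C) with hω
  have hωU : ω ∈ ⋂ k, U k := by
    rw [← hFU]
    have : {i | ω i = true} = C := by ext i; simp [hω]
    simpa [this] using hCF
  obtain ⟨mb, hmb⟩ : ∃ mb, ∀ ω' : ℕ → Bool, (∀ i ≤ mb, ω' i = ω i) → ω' ∈ U n := by
    have h : U n ∈ nhds ω := (hUopen n).mem_nhds (by exact Set.mem_iInter.mp hωU n)
    rw [nhds_pi, Filter.mem_pi] at h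
    obtain ⟨I, hI, t, ht, hsub⟩ := h
    obtain ⟨mb, hm⟩ := hI.bddAbove
    refine ⟨mb, fun ω' hω' => hsub fun i hi => ?_⟩
    rw [hω' i (hm hi)]
    have h2 := ht i
    rwa [nhds_discrete, Filter.mem_pure] at h2
  set m' : ℕ := (max (max m mb) (S.sup id)) + 1 with hm'
  set S' : Finset ℕ := (Finset.range (m'+1)).filter (fun a => a ∈ C) with hS'
  have hmemS' : ∀ a, a ∈ S' ↔ (a ≤ m' ∧ a ∈ C) := by
    intro a; simp [hS', Nat.lt_succ_iff]
  refine ⟨(m', S'), ?_, ?_, ?_, ?_, ?_⟩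
  · simp only [hm']; omega
  · intro a ha
    rw [hmemS']
    exact ⟨le_trans (le_trans (Finset.le_sup (f := id) ha) (le_max_right _ _)) (Nat.le_succ _),
      Or.inl ha⟩
  · intro a ha; exact ((hmemS' a).mp ha).1
  · intro a ha haS
    have hc := ((hmemS' a).mp ha).2
    rcases hc with h | h
    · exact absurd h haS
    · obtain ⟨h1, h2⟩ := h
      refine ⟨h1 m (Finset.self_mem_range_succ m), fun v hv hadj => ?_⟩
      have h3 := h2 v (Finset.mem_range.mpr (Nat.lt_succ_of_le hv))
      simp only [iff_false, Bool.false_eq_true] at h3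
      exact h3 hadj
  · intro ω' hω'
    refine hmb ω' fun i hi => ?_
    have him : i ≤ m' := le_trans hi (by omega)
    have : ω' i = true ↔ i ∈ C := by
      rw [hω' i him, hmemS']
      exact ⟨fun h => h.2, fun h => ⟨him, h⟩⟩
    simp only [hω]
    rcases Bool.eq_false_or_eq_true (ω' i) with h | h <;> rw [h] <;>
      [skip; (symm)] <;> simp_all


/-- Let 𝓕 be a partition regular family of infinite subsets of ℕ that is Π⁰₂ (the
intersection of countably many open sets U_n in 2^ℕ). If a graph on ℕ satisfies
property (††), then some A ∈ 𝓕 has all connected components of its induced subgraph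
finite. -/
theorem Gdelta_partition_regular_nonuniversal (G : SimpleGraph ℕ) (𝓕 : Set (Set ℕ))
    (hsup : ∀ A ∈ 𝓕, ∀ B : Set ℕ, A ⊆ B → B ∈ 𝓕)
    (hpr : ∀ A ∈ 𝓕, ∀ (k : ℕ) (As : Fin k → Set ℕ), A = ⋃ i, As i → ∃ i, As i ∈ 𝓕)
    (hinf : ∀ A ∈ 𝓕, A.Infinite)
    (U : ℕ → Set (ℕ → Bool)) (hUopen : ∀ n, IsOpen (U n))
    (hFU : {ω : ℕ → Bool | {n | ω n = true} ∈ 𝓕} = ⋂ n, U n)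
    (hddag : ∀ (F : Finset ℕ) (t : ℕ → Bool),
      {n : ℕ | (∀ v ∈ F, v < n) ∧ ∀ v ∈ F, (G.Adj n v ↔ t v = true)} ∈ 𝓕) :
    ∃ A ∈ 𝓕, ∀ a : A, {b : A | (SimpleGraph.induce A G).Reachable a b}.Finite := by
  classical
  choose step h1 h2 h3 h4 h5 using step_ex G 𝓕 hsup U hUopen hFU hddag
  set F : ℕ → ℕ × Finset ℕ :=
    fun n => Nat.rec ((0 : ℕ), (∅ : Finset ℕ)) (fun k ih => step k ih.1 ih.2) n with hF
  set m : ℕ → ℕ := fun n => (F n).1 with hm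
  set S : ℕ → Finset ℕ := fun n => (F n).2 with hS
  have hmlt : ∀ n, m n < m (n+1) := fun n => h1 n (m n) (S n)
  have hSsub : ∀ n, S n ⊆ S (n+1) := fun n => h2 n (m n) (S n)
  have hbound : ∀ n, ∀ a ∈ S n, a ≤ m n := by
    intro n
    cases n with
    | zero => intro a ha; exact absurd ha (Finset.notMem_empty a)
    | succ k => exact h3 k (m k) (S k)
  have hnew : ∀ n, ∀ a ∈ S (n+1), a ∉ S n → m n < a ∧ ∀ v ≤ m n, ¬ G.Adj a v :=
    fun n => h4 n (m n) (S n)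
  have hU' : ∀ n (ω' : ℕ → Bool), (∀ i ≤ m (n+1), (ω' i = true ↔ i ∈ S (n+1))) → ω' ∈ U n :=
    fun n => h5 n (m n) (S n)
  have hmmono : Monotone m := monotone_nat_of_le_succ fun n => (hmlt n).le
  have hSmono : Monotone S := monotone_nat_of_le_succ hSsub
  set A : Set ℕ := ⋃ n, ↑(S n) with hA
  have hmemA : ∀ a : ℕ, a ∈ A ↔ ∃ n, a ∈ S n := by
    intro a; simp [hA]
  have hAcap : ∀ n a, a ∈ A → a ≤ m n → a ∈ S n := by
    intro n a ha hle
    obtain ⟨k, hk⟩ := (hmemA a).mp ha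
    rcases le_or_gt k n with h | h
    · exact hSmono h hk
    · have key : ∀ j, a ∈ S (n + j) → a ∈ S n := by
        intro j
        induction j with
        | zero => exact id
        | succ j ih =>
          intro hj
          by_cases hcase : a ∈ S (n + j)
          · exact ih hcase
          · have hgt := (hnew (n+j) a hj hcase).1
            have hmon : m n ≤ m (n+j) := hmmono (Nat.le_add_right n j)
            omega
      have := key (k - n)
      rw [Nat.add_sub_cancel' h.le] at this
      exact this hk
  -- A is in every U n, hence in 𝓕
  have hAU : ∀ n, (fun i => decide (i ∈ A)) ∈ U n := by
    intro n
    apply hU' n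
    intro i hi
    simp only [decide_eq_true_eq]
    constructor
    · intro hiA
      exact hAcap (n+1) i hiA hi
    · intro hiS
      exact (hmemA i).mpr ⟨n+1, hiS⟩
  have hAF : A ∈ 𝓕 := by
    have h := Set.mem_iInter.mpr hAU
    rw [← hFU] at h
    have heq : {i : ℕ | decide (i ∈ A) = true} = A := by ext i; simp
    have h2 : {i : ℕ | decide (i ∈ A) = true} ∈ 𝓕 := h
    rwa [heq] at h2
  -- no edges cross the threshold m n within A
  have hadj : ∀ n a b, a ≤ m n → b ∈ A → m n < b → ¬ G.Adj b a := by
    intro n a b ha hb hbm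
    obtain ⟨k, hk⟩ := (hmemA b).mp hb
    have hnk : n + 1 ≤ k := by
      by_contra hcon
      have : b ∈ S n := hSmono (by omega) hk
      have := hbound n b this
      omega
    have key : ∀ k, n + 1 ≤ k → b ∈ S k → ¬ G.Adj b a := by
      intro k hk1
      induction k with
      | zero => omega
      | succ j ih =>
        intro hj
        by_cases hcase : b ∈ S j
        · rcases Nat.lt_or_ge n j with h' | h'
          · exact ih (by omega) hcase
          · have : b ∈ S n := hSmono h' hcase
            have := hbound n b this
            omega
        · have h2 := (hnew j b hj hcase).2
          have hmon : m n ≤ m j := hmmono (by omega)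
          exact h2 a (by omega)
    exact key k hnk hk
  refine ⟨A, hAF, ?_⟩
  intro a
  obtain ⟨n, hn⟩ : ∃ n, (a : ℕ) ∈ S n := (hmemA _).mp a.2
  have hreach : ∀ x y : A, (SimpleGraph.induce A G).Reachable x y →
      (x : ℕ) ≤ m n → (y : ℕ) ≤ m n := by
    intro x y hxy
    obtain ⟨w⟩ := hxy
    induction w with
    | nil => exact id
    | @cons u c v h p ih =>
      intro hx
      apply ih
      by_contra hc
      push_neg at hc
      have hG : G.Adj (u : ℕ) (c : ℕ) := by
        simpa using h
      exact hadj n u c hx c.2 hc hG.symm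
  have hsub : {b : A | (SimpleGraph.induce A G).Reachable a b} ⊆
      {b : A | (b : ℕ) ≤ m n} := fun b hb => hreach a b hb (hbound n _ hn)
  have hfin : ({b : A | (b : ℕ) ≤ m n}).Finite := by
    have : {b : A | (b : ℕ) ≤ m n} = (Subtype.val : A → ℕ) ⁻¹' Set.Iic (m n) := rfl
    rw [this]
    exact Set.Finite.preimage Subtype.val_injective.injOn
      (Set.finite_Iic (m n))
  exact hfin.subset hsub
end
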